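/- arXiv:1605.08725 — 2 statements merged into one kernel-verified Lean document; each statement's English description precedes it below -/
import Mathlib

section
/- For every formal power series z ∈ 1 + t·ℚ[[t]] there exist unique rational numbers (q_n)_{n≥1} such that z = ∏_{n≥1} (1 - t^n)^{q_n}, where (1-t^n)^{q} is defined as exp(q·log(1-t^n)). Equivalently, the series (log(1-t^n))_{n≥1} form a basis of the ℚ-module t·ℚ[[t]]. -/
/-- Formal exponential `exp x = ∑_{k ≥ 0} x^k / k!` of a power series `x`
(with zero constant term), defined coefficientwise. -/
noncomputable def expS (x : PowerSeries ℚ) : PowerSeries ℚ :=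
  PowerSeries.mk fun n =>
    ∑ k ∈ Finset.range (n + 1), PowerSeries.coeff n (x ^ k) / (Nat.factorial k : ℚ)

/-- Formal logarithm `log z = -∑_{k ≥ 1} (1-z)^k / k` of a power series `z`
(with constant term 1), defined coefficientwise. -/
noncomputable def logS (z : PowerSeries ℚ) : PowerSeries ℚ :=
  PowerSeries.mk fun n =>
    ∑ k ∈ Finset.range (n + 1), (-1) ^ (k + 1) / (k : ℚ) * PowerSeries.coeff n ((z - 1) ^ k)

/-- Rational power `(w)^q := exp (q • log w)` for `w ∈ 1 + t·ℚ[[t]]`. -/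
noncomputable def rpowS (q : ℚ) (w : PowerSeries ℚ) : PowerSeries ℚ :=
  expS (q • logS w)

/-! The factor `(1 - tⁿ)^q` is `1 - q tⁿ` modulo `t^(n+1)`. Hence the coefficient of `t^m` in
`∏_{n ≤ m} (1 - tⁿ)^{q n}` equals `-q m` plus a polynomial in `q 1, …, q (m-1)`, so matching
the coefficients of `z` one degree at a time determines each `q m` from the previous ones. -/

open PowerSeries Finset

section CommSemiring

variable {R : Type*} [CommSemiring R]

lemma coeff_pow_eq_zero_of_lt_mul {x : R⟦X⟧} {m k i : ℕ} (hx : ∀ j < m, coeff j x = 0)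
    (hi : i < m * k) : coeff i (x ^ k) = 0 := by
  have hdvd : X ^ (m * k) ∣ x ^ k := by
    rw [pow_mul]
    exact pow_dvd_pow_of_dvd (X_pow_dvd_iff.mpr hx) k
  exact X_pow_dvd_iff.mp hdvd i hi

lemma coeff_mul_of_coeff_eq_zero {f : R⟦X⟧} {m : ℕ} (hm : 0 < m)
    (hf : ∀ i, 0 < i → i < m → coeff i f = 0) (P : R⟦X⟧) :
    coeff m (f * P) = constantCoeff f * coeff m P + coeff m f * constantCoeff P := by
  rw [coeff_mul, Nat.sum_antidiagonal_eq_sum_range_succ_mk,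
    sum_eq_add_of_mem 0 m (mem_range.mpr (by omega)) (mem_range.mpr (by omega)) hm.ne]
  · simp only [coeff_zero_eq_constantCoeff_apply, Nat.sub_zero, Nat.sub_self]
  · intro i hi hi'
    rw [hf i (by omega) (by rw [mem_range] at hi; omega), zero_mul]

end CommSemiring

lemma coeff_one_sub_X_pow_sub_one_pow (n k i : ℕ) :
    coeff i (((1 : ℚ⟦X⟧) - X ^ n - 1) ^ k) = if i = n * k then (-1) ^ k else 0 := by
  rw [sub_sub_cancel_left, neg_pow, ← pow_mul, ← map_one C, ← map_neg, ← map_pow,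
    coeff_C_mul, coeff_X_pow, mul_ite, mul_one, mul_zero]

lemma coeff_logS_one_sub_X_pow_of_lt {n i : ℕ} (hi : i < n) :
    coeff i (logS (1 - X ^ n)) = 0 := by
  simp only [logS, coeff_mk, coeff_one_sub_X_pow_sub_one_pow]
  refine sum_eq_zero fun k hk => ?_
  rcases Nat.eq_zero_or_pos k with rfl | hk0
  · simp
  · rw [if_neg (by nlinarith [mem_range.mp hk]), mul_zero]

lemma coeff_logS_one_sub_X_pow_self {n : ℕ} (hn : 0 < n) :
    coeff n (logS (1 - X ^ n)) = -1 := by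
  simp only [logS, coeff_mk, coeff_one_sub_X_pow_sub_one_pow]
  rw [sum_eq_single 1]
  · norm_num
  · intro k _ hk1
    rw [if_neg fun h => hk1 (by simpa [hn.ne'] using h), mul_zero]
  · intro h
    exact absurd (mem_range.mpr (by omega)) h

lemma constantCoeff_expS (x : ℚ⟦X⟧) : constantCoeff (expS x) = 1 := by
  rw [← coeff_zero_eq_constantCoeff_apply]
  simp [expS]

lemma coeff_expS_of_lt {x : ℚ⟦X⟧} {m i : ℕ} (hx : ∀ j < m, coeff j x = 0) (hi0 : 0 < i)
    (him : i < m) : coeff i (expS x) = 0 := by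
  simp only [expS, coeff_mk]
  refine sum_eq_zero fun k _ => ?_
  rcases Nat.eq_zero_or_pos k with rfl | hk0
  · simp [coeff_one, hi0.ne']
  · rw [coeff_pow_eq_zero_of_lt_mul hx (by nlinarith), zero_div]

lemma coeff_expS_self {x : ℚ⟦X⟧} {m : ℕ} (hm : 0 < m) (hx : ∀ j < m, coeff j x = 0) :
    coeff m (expS x) = coeff m x := by
  simp only [expS, coeff_mk]
  rw [sum_eq_single 1]
  · simp
  · intro k _ hk1
    rcases Nat.eq_zero_or_pos k with rfl | hk0
    · simp [coeff_one, hm.ne']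
    · rw [coeff_pow_eq_zero_of_lt_mul hx (by nlinarith [show 2 ≤ k by omega]), zero_div]
  · intro h
    exact absurd (mem_range.mpr (by omega)) h

lemma coeff_smul_logS_one_sub_X_pow_of_lt (q : ℚ) {n j : ℕ} (hj : j < n) :
    coeff j (q • logS (1 - X ^ n)) = 0 := by
  rw [map_smul, coeff_logS_one_sub_X_pow_of_lt hj, smul_zero]

lemma constantCoeff_rpowS (q : ℚ) (w : ℚ⟦X⟧) : constantCoeff (rpowS q w) = 1 :=
  constantCoeff_expS _

lemma coeff_rpowS_one_sub_X_pow_of_lt (q : ℚ) {n i : ℕ} (hi0 : 0 < i) (hin : i < n) :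
    coeff i (rpowS q (1 - X ^ n)) = 0 :=
  coeff_expS_of_lt (fun _ => coeff_smul_logS_one_sub_X_pow_of_lt q) hi0 hin

lemma coeff_rpowS_one_sub_X_pow_self (q : ℚ) {n : ℕ} (hn : 0 < n) :
    coeff n (rpowS q (1 - X ^ n)) = -q := by
  rw [rpowS, coeff_expS_self hn fun _ => coeff_smul_logS_one_sub_X_pow_of_lt q, map_smul,
    coeff_logS_one_sub_X_pow_self hn, smul_eq_mul, mul_neg_one]

lemma constantCoeff_prod_rpowS (q : ℕ → ℚ) (s : Finset ℕ) :
    constantCoeff (∏ n ∈ s, rpowS (q n) (1 - X ^ n)) = 1 := by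
  rw [map_prod]
  exact prod_eq_one fun _ _ => constantCoeff_rpowS _ _

lemma coeff_succ_prod_rpowS (q : ℕ → ℚ) (m : ℕ) :
    coeff (m + 1) (∏ n ∈ Icc 1 (m + 1), rpowS (q n) (1 - X ^ n)) =
      coeff (m + 1) (∏ n ∈ Icc 1 m, rpowS (q n) (1 - X ^ n)) - q (m + 1) := by
  rw [prod_Icc_succ_top (by omega), mul_comm,
    coeff_mul_of_coeff_eq_zero m.succ_pos fun i => coeff_rpowS_one_sub_X_pow_of_lt _,
    constantCoeff_rpowS, coeff_rpowS_one_sub_X_pow_self _ m.succ_pos, constantCoeff_prod_rpowS]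
  ring

noncomputable def factorExponent (z : ℚ⟦X⟧) : ℕ → ℚ
  | 0 => 0
  | m + 1 =>
    coeff (m + 1) (∏ n ∈ (Icc 1 m).attach, rpowS (factorExponent z n) (1 - X ^ (n : ℕ))) -
      coeff (m + 1) z
  decreasing_by exact Nat.lt_succ_of_le (mem_Icc.mp n.2).2

lemma factorExponent_succ (z : ℚ⟦X⟧) (m : ℕ) :
    factorExponent z (m + 1) =
      coeff (m + 1) (∏ n ∈ Icc 1 m, rpowS (factorExponent z n) (1 - X ^ n)) -
        coeff (m + 1) z := by
  rw [factorExponent, prod_attach (Icc 1 m) fun n => rpowS (factorExponent z n) (1 - X ^ n)]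

lemma coeff_succ_eq_coeff_prod_rpowS_iff (z : ℚ⟦X⟧) (q : ℕ → ℚ) (m : ℕ) :
    coeff (m + 1) z = coeff (m + 1) (∏ n ∈ Icc 1 (m + 1), rpowS (q n) (1 - X ^ n)) ↔
      q (m + 1) = coeff (m + 1) (∏ n ∈ Icc 1 m, rpowS (q n) (1 - X ^ n)) - coeff (m + 1) z := by
  rw [coeff_succ_prod_rpowS]
  constructor <;> intro h <;> linarith

/-- The infinite product is understood coefficientwise: the coefficient of `t^m` only depends
on the factors with `n ≤ m`. -/
theorem stmt_2 (z : PowerSeries ℚ) (hz : PowerSeries.constantCoeff z = 1) :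
    ∃! q : ℕ → ℚ, q 0 = 0 ∧ ∀ m : ℕ,
      PowerSeries.coeff m z =
        PowerSeries.coeff m
          (∏ n ∈ Finset.Icc 1 m, rpowS (q n) (1 - PowerSeries.X ^ n)) := by
  refine ⟨factorExponent z, ⟨by rw [factorExponent], ?_⟩, ?_⟩
  · rintro (_ | m)
    · simpa using hz
    · exact (coeff_succ_eq_coeff_prod_rpowS_iff z _ m).mpr (factorExponent_succ z m)
  · rintro q ⟨hq0, hq⟩
    funext m
    induction m using Nat.strong_induction_on with
    | _ m ih =>
      rcases m with _ | m
      · rw [hq0, factorExponent]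
      · have hprod : ∏ n ∈ Icc 1 m, rpowS (q n) (1 - X ^ n) =
            ∏ n ∈ Icc 1 m, rpowS (factorExponent z n) (1 - X ^ n) :=
          prod_congr rfl fun n hn => by rw [ih n (by rw [mem_Icc] at hn; omega)]
        rw [(coeff_succ_eq_coeff_prod_rpowS_iff z q m).mp (hq (m + 1)), hprod,
          factorExponent_succ]
end

section
/- Let A : ℝ^d → ℝ^d be linear with no eigenvalue on the unit circle (hyperbolic). Then for every k ≥ 1, sign det(I - A^k) = (-1)^{u_k}, where u_k is the number of real eigenvalues λ of A (with multiplicity) satisfying λ^k > 1. In particular, sign det(I - A^k) depends only on k mod 2 and on the parities σ^- = #{λ ∈ σ(A) : λ < -1} mod 2 and σ^+ = #{λ ∈ σ(A) : λ > 1} mod 2. -/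
open scoped Classical

set_option maxHeartbeats 1000000
section AuxStmt18
open Polynomial

lemma aux_fubini {α β M : Type*} [CommMonoid M] (s : Multiset α) (t : Multiset β) (f : α → β → M) :
    (s.map fun a => (t.map fun b => f a b).prod).prod
      = (t.map fun b => (s.map fun a => f a b).prod).prod := by
  induction s using Multiset.induction with
  | empty => simp
  | cons a s ih => simp [ih, Multiset.prod_map_mul]

lemma aux_eval_charpoly {d : ℕ} (B : Matrix (Fin d) (Fin d) ℂ) (r : ℂ) :
    B.charpoly.eval r = (Matrix.diagonal (fun _ => r) - B).det := by
  rw [Matrix.charpoly, ← Polynomial.coe_evalRingHom, RingHom.map_det]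
  congr 1
  ext i j
  by_cases h : i = j <;> simp [Matrix.charmatrix_apply, Matrix.diagonal, h]

lemma aux_neg_prod {d : ℕ} (R : Multiset ℂ) (hR : Multiset.card R = d) (g : ℂ → ℂ) :
    (R.map fun μ => -(g μ)).prod = (-1) ^ d * (R.map g).prod := by
  have : (R.map fun μ => -(g μ)) = (R.map g).map Neg.neg := by
    rw [Multiset.map_map]; rfl
  rw [this, Multiset.prod_map_neg, Multiset.card_map, hR]

lemma aux_det_one_sub_pow {d k : ℕ} (hk : k ≠ 0) (B : Matrix (Fin d) (Fin d) ℂ) :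
    (1 - B ^ k).det = (B.charpoly.roots.map fun μ => 1 - μ ^ k).prod := by
  set R := B.charpoly.roots with hRdef
  have hmB : B.charpoly.Monic := B.charpoly_monic
  have hsB : B.charpoly.Splits := IsAlgClosed.splits _
  have hRcard : Multiset.card R = d := by
    rw [hRdef, splits_iff_card_roots.mp hsB, Matrix.charpoly_natDegree_eq_dim,
      Fintype.card_fin]
  set q : ℂ[X] := X ^ k - C 1 with hq
  have hmq : q.Monic := monic_X_pow_sub_C 1 hk
  have hsq : q.Splits := IsAlgClosed.splits _
  have hevalq : ∀ μ : ℂ, (q.roots.map fun r => μ - r).prod = μ ^ k - 1 := by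
    intro μ
    have h1 : q.eval μ = μ ^ k - 1 := by simp [hq]
    rw [← h1]
    conv_rhs => rw [hsq.eq_prod_roots_of_monic hmq]
    rw [eval_multiset_prod, Multiset.map_map]
    simp
  have hcharev : ∀ r : ℂ, (R.map fun μ => μ - r).prod = (B - Matrix.diagonal fun _ => r).det := by
    intro r
    have h1 : B.charpoly.eval r = (R.map fun μ => r - μ).prod := by
      conv_lhs => rw [hsB.eq_prod_roots_of_monic hmB]
      rw [eval_multiset_prod, Multiset.map_map]
      simp
      rfl
    have h2 : B - Matrix.diagonal (fun _ => r) = -(Matrix.diagonal (fun _ => r) - B) := by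
      rw [neg_sub]
    rw [h2, Matrix.det_neg, ← aux_eval_charpoly, h1, Fintype.card_fin]
    rw [← aux_neg_prod R hRcard]
    simp [neg_sub]
  obtain ⟨l, hl⟩ : ∃ l : List ℂ, q.roots = ↑l := ⟨q.roots.toList, (Multiset.coe_toList _).symm⟩
  have hA : B ^ k - 1 = (l.map fun r => B - Matrix.diagonal fun _ => r).prod := by
    have h0 : B ^ k - 1 = Polynomial.aeval B q := by simp [hq]
    rw [h0]
    conv_lhs => rw [hsq.eq_prod_roots_of_monic hmq, hl]
    rw [Multiset.map_coe, Multiset.prod_coe, map_list_prod, List.map_map]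
    congr 1
    apply List.map_congr_left
    intro r _
    simp [Matrix.algebraMap_eq_diagonal]
  have hdet1 : (B ^ k - 1).det = (R.map fun μ => μ ^ k - 1).prod := by
    rw [hA, ← Matrix.coe_detMonoidHom, map_list_prod, List.map_map]
    have h1 : (l.map (⇑Matrix.detMonoidHom ∘ fun r => B - Matrix.diagonal fun _ => r))
        = l.map fun r => (R.map fun μ => μ - r).prod := by
      apply List.map_congr_left
      intro r _
      simp only [Function.comp_apply, Matrix.coe_detMonoidHom]
      exact (hcharev r).symm
    rw [h1, ← Multiset.prod_coe, ← Multiset.map_coe, ← hl, aux_fubini]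
    apply congrArg
    apply Multiset.map_congr rfl
    intro μ _
    exact hevalq μ
  have h3 : (1 : Matrix (Fin d) (Fin d) ℂ) - B ^ k = -(B ^ k - 1) := by rw [neg_sub]
  rw [h3, Matrix.det_neg, hdet1, Fintype.card_fin, ← aux_neg_prod R hRcard]
  simp [neg_sub]

lemma aux_conj_prod (f : ℂ → ℂ) (hf : ∀ z, f ((starRingEnd ℂ) z) = (starRingEnd ℂ) (f z)) :
    ∀ (n : ℕ) (S : Multiset ℂ), Multiset.card S = n → S.map (starRingEnd ℂ) = S →
      (∀ z ∈ S, z.im ≠ 0) → (∀ z ∈ S, f z ≠ 0) →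
      0 < ((S.map f).prod).re ∧ ((S.map f).prod).im = 0 := by
  intro n
  induction n using Nat.strong_induction_on with
  | _ n ih =>
    intro S hcard hconj him hne
    rcases Multiset.empty_or_exists_mem S with hS | ⟨μ, hμ⟩
    · subst hS; simp
    · have hν : (starRingEnd ℂ) μ ∈ S := by
        rw [← hconj]; exact Multiset.mem_map_of_mem _ hμ
      have hνne : (starRingEnd ℂ) μ ≠ μ := by
        intro h
        exact him μ hμ ((Complex.conj_eq_iff_im).mp h)
      have hν' : (starRingEnd ℂ) μ ∈ S.erase μ := (Multiset.mem_erase_of_ne hνne).mpr hν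
      set T := (S.erase μ).erase ((starRingEnd ℂ) μ) with hT
      have hS2 : S = μ ::ₘ (starRingEnd ℂ) μ ::ₘ T := by
        rw [hT, Multiset.cons_erase hν', Multiset.cons_erase hμ]
      have hTsub : ∀ z ∈ T, z ∈ S := by
        intro z hz
        have := Multiset.mem_of_mem_erase (Multiset.mem_of_mem_erase hz)
        exact this
      have hTcount : ∀ a : ℂ, Multiset.count a T
          = Multiset.count a S - (if a = μ then 1 else 0)
            - (if a = (starRingEnd ℂ) μ then 1 else 0) := by
        intro a
        rw [hT]
        rcases Classical.em (a = (starRingEnd ℂ) μ) with h2 | h2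
        · subst h2
          rw [Multiset.count_erase_self, if_pos rfl, if_neg ?_]
          · rw [Multiset.count_erase_of_ne ?_]
            · omega
            · exact hνne
          · exact hνne
        · rw [Multiset.count_erase_of_ne h2, if_neg h2]
          rcases Classical.em (a = μ) with h1 | h1
          · subst h1
            rw [Multiset.count_erase_self, if_pos rfl]
            omega
          · rw [Multiset.count_erase_of_ne h1, if_neg h1]
            omega
      have hconjinj : Function.Injective (starRingEnd ℂ) := (starRingEnd ℂ).injective
      have hScount : ∀ a : ℂ, Multiset.count ((starRingEnd ℂ) a) S = Multiset.count a S := by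
        intro a
        conv_lhs => rw [← hconj]
        exact Multiset.count_map_eq_count' _ _ hconjinj a
      have hmapc : ∀ (U : Multiset ℂ) (a : ℂ),
          Multiset.count a (U.map (starRingEnd ℂ)) = Multiset.count ((starRingEnd ℂ) a) U := by
        intro U a
        have key := Multiset.count_map_eq_count' (starRingEnd ℂ) U hconjinj ((starRingEnd ℂ) a)
        rwa [Complex.conj_conj] at key
      have hTconj : T.map (starRingEnd ℂ) = T := by
        ext a
        have e1 : ((starRingEnd ℂ) a = μ) ↔ (a = (starRingEnd ℂ) μ) := by
          constructor <;> intro h <;> subst h <;> simp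
        have e2 : ((starRingEnd ℂ) a = (starRingEnd ℂ) μ) ↔ (a = μ) := hconjinj.eq_iff
        rw [hmapc, hTcount, hTcount, hScount]
        simp only [e1, e2]
        rcases Classical.em (a = μ) with h | h <;> rcases Classical.em (a = (starRingEnd ℂ) μ) with h' | h' <;>
          first
            | (simp only [h, h', if_pos rfl, if_neg, Nat.sub_sub, Nat.add_comm]; omega)
            | (simp only [if_pos, if_neg h, if_neg h', Nat.sub_sub, Nat.add_comm]; omega)
            | (rw [if_pos h, if_pos h', if_neg (by simp [h'] : ¬ a = μ), if_neg]; omega)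
            | omega
      have hcardT : Multiset.card T + 2 = n := by
        rw [← hcard, hS2]; simp
      have ihT := ih (Multiset.card T) (by omega) T rfl hTconj
        (fun z hz => him z (hTsub z hz)) (fun z hz => hne z (hTsub z hz))
      have hprod : (S.map f).prod
          = (Complex.normSq (f μ) : ℂ) * (T.map f).prod := by
        rw [hS2]
        simp only [Multiset.map_cons, Multiset.prod_cons]
        rw [hf μ, ← mul_assoc]
        congr 1
        rw [Complex.mul_conj]
      have hpos : 0 < Complex.normSq (f μ) := by
        rw [Complex.normSq_pos]; exact hne μ hμ
      rw [hprod]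
      constructor
      · simp only [Complex.mul_re, Complex.ofReal_re, Complex.ofReal_im, zero_mul, sub_zero]
        exact mul_pos hpos ihT.1
      · simp only [Complex.mul_im, Complex.ofReal_re, Complex.ofReal_im, zero_mul, add_zero]
        rw [ihT.2, mul_zero]

lemma aux_sign_prod : ∀ (m : Multiset ℝ), (∀ x ∈ m, x ≠ 0) →
    ((SignType.sign m.prod : ℤ)) = (-1) ^ Multiset.card (m.filter fun x => x < 0) := by
  intro m
  induction m using Multiset.induction with
  | empty => simp
  | cons a s ih =>
    intro h
    have ha : a ≠ 0 := h a (Multiset.mem_cons_self _ _)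
    have hs := ih fun x hx => h x (Multiset.mem_cons_of_mem hx)
    rw [Multiset.prod_cons, sign_mul]
    rcases ha.lt_or_gt with hlt | hgt
    · rw [Multiset.filter_cons_of_pos (p := fun x => x < 0) _ hlt]
      simp only [Multiset.card_cons, pow_succ]
      rw [sign_neg hlt]
      push_cast
      rw [hs]; simp
    · rw [Multiset.filter_cons_of_neg (p := fun x => x < 0) _ (not_lt.mpr hgt.le)]
      rw [sign_pos hgt]
      push_cast
      rw [hs]; simp

lemma aux_pow_ne_one {x : ℝ} (hx : |x| ≠ 1) {k : ℕ} (hk : k ≠ 0) : x ^ k ≠ 1 := by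
  intro h
  have h1 : |x| ^ k = 1 := by
    rw [← abs_pow, h, abs_one]
  rcases lt_trichotomy |x| 1 with hlt | heq | hgt
  · have := pow_lt_one₀ (abs_nonneg x) hlt hk
    linarith
  · exact hx heq
  · have := one_lt_pow₀ hgt hk
    linarith

lemma aux_pow_gt_one_odd {x : ℝ} {k : ℕ} (hk : k % 2 = 1) : 1 < x ^ k ↔ 1 < x := by
  have hk0 : k ≠ 0 := by omega
  constructor
  · intro h
    by_contra hle
    push_neg at hle
    rcases le_or_gt 0 x with h0 | h0
    · have := pow_le_one₀ (n := k) h0 hle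
      linarith
    · have hodd : Odd k := Nat.odd_iff.mpr hk
      have := hodd.pow_neg h0
      linarith
  · intro h
    exact one_lt_pow₀ h hk0

lemma aux_pow_gt_one_even {x : ℝ} {k : ℕ} (hk0 : k ≠ 0) (hk : k % 2 = 0) :
    1 < x ^ k ↔ (1 < x ∨ x < -1) := by
  have heven : Even k := Nat.even_iff.mpr hk
  have habs : |x| ^ k = x ^ k := heven.pow_abs x
  constructor
  · intro h
    have h1 : 1 < |x| := by
      by_contra hle
      push_neg at hle
      have := pow_le_one₀ (abs_nonneg x) hle (n := k)
      rw [habs] at this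
      linarith
    rcases lt_abs.mp h1 with h2 | h2
    · exact Or.inl h2
    · exact Or.inr (by linarith)
  · intro h
    have h1 : 1 < |x| := by
      rcases h with h | h
      · exact lt_abs.mpr (Or.inl h)
      · exact lt_abs.mpr (Or.inr (by linarith))
    have := one_lt_pow₀ h1 hk0
    rw [habs] at this
    exact this

lemma aux_filter_conj (R : Multiset ℂ) (h : R.map (starRingEnd ℂ) = R)
    (p : ℂ → Prop) [DecidablePred p] (hp : ∀ z, p ((starRingEnd ℂ) z) ↔ p z) :
    (R.filter p).map (starRingEnd ℂ) = R.filter p := by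
  have hconjinj : Function.Injective (starRingEnd ℂ) := (starRingEnd ℂ).injective
  have hmapc : ∀ (U : Multiset ℂ) (a : ℂ),
      Multiset.count a (U.map (starRingEnd ℂ)) = Multiset.count ((starRingEnd ℂ) a) U := by
    intro U a
    have key := Multiset.count_map_eq_count' (starRingEnd ℂ) U hconjinj ((starRingEnd ℂ) a)
    rwa [Complex.conj_conj] at key
  have hScount : ∀ a : ℂ, Multiset.count ((starRingEnd ℂ) a) R = Multiset.count a R := by
    intro a
    conv_lhs => rw [← h]
    exact Multiset.count_map_eq_count' _ _ hconjinj a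
  ext a
  rw [hmapc, Multiset.count_filter, Multiset.count_filter]
  by_cases hpa : p a
  · rw [if_pos ((hp a).mpr hpa), if_pos hpa, hScount]
  · rw [if_neg (fun hc => hpa ((hp a).mp hc)), if_neg hpa]

end AuxStmt18

/-- For a hyperbolic real matrix `A` (no complex eigenvalue on the unit circle), the sign of
`det (I - A^k)` is `(-1)^{u k}` where `u k` is the number of real eigenvalues `λ` of `A`
(with multiplicity) with `λ^k > 1`; moreover this sign depends only on the parity of `k` and
on the parities `σ⁻ = #{λ < -1} mod 2` and `σ⁺ = #{λ > 1} mod 2`. -/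
theorem stmt_18 (d : ℕ) (A : Matrix (Fin d) (Fin d) ℝ)
    (hyp : ∀ μ ∈ (Matrix.charpoly (A.map fun r => (r : ℂ))).roots, ‖μ‖ ≠ 1) :
    let R : Multiset ℂ := (Matrix.charpoly (A.map fun r => (r : ℂ))).roots
    let u : ℕ → ℕ := fun k => Multiset.card (R.filter fun μ => μ.im = 0 ∧ 1 < (μ ^ k).re)
    let σplus : ℕ := Multiset.card (R.filter fun μ => μ.im = 0 ∧ 1 < μ.re)
    let σminus : ℕ := Multiset.card (R.filter fun μ => μ.im = 0 ∧ μ.re < -1)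
    (∀ k : ℕ, 1 ≤ k →
      ((SignType.sign ((1 - A ^ k).det) : ℤ) = (-1) ^ (u k))) ∧
    (∀ k : ℕ, 1 ≤ k →
      (k % 2 = 1 → ((-1 : ℤ)) ^ (u k) = (-1) ^ σplus) ∧
      (k % 2 = 0 → ((-1 : ℤ)) ^ (u k) = (-1) ^ (σplus + σminus))) := by
  intro R u σplus σminus
  set B : Matrix (Fin d) (Fin d) ℂ := A.map (fun r => (r : ℂ)) with hB
  have hRB : R = B.charpoly.roots := rfl
  have hsB : B.charpoly.Splits := IsAlgClosed.splits _
  have hconjpoly : B.charpoly.map (starRingEnd ℂ) = B.charpoly := by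
    rw [show B = A.map Complex.ofRealHom from rfl, Matrix.charpoly_map, Polynomial.map_map]
    congr 1
    ext r
    simp [Complex.conj_ofReal]
  have hconjR : R.map (starRingEnd ℂ) = R := by
    rw [hRB]
    conv_rhs => rw [← hconjpoly, hsB.roots_map]
  have habs : ∀ μ ∈ R, ‖μ‖ ≠ 1 := hyp
  have hnz : ∀ μ ∈ R, ∀ {k : ℕ}, k ≠ 0 → 1 - μ ^ k ≠ 0 := by
    intro μ hμ k hk h
    have h1 : μ ^ k = 1 := by linear_combination -h
    have h2 : ‖μ‖ ^ k = 1 := by rw [← norm_pow, h1, norm_one]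
    have h3 : |‖μ‖| ≠ 1 := by
      rw [abs_of_nonneg (norm_nonneg _)]
      exact habs μ hμ
    exact aux_pow_ne_one h3 hk h2
  have hreal : ∀ μ : ℂ, μ.im = 0 → ∀ k : ℕ, (μ ^ k) = ((μ.re ^ k : ℝ) : ℂ) := by
    intro μ him k
    have h1 : μ = (μ.re : ℂ) := Complex.ext rfl (by simp [him])
    conv_lhs => rw [h1]
    rw [← Complex.ofReal_pow]
  have hrealre : ∀ μ : ℂ, μ.im = 0 → ∀ k : ℕ, (μ ^ k).re = μ.re ^ k := by
    intro μ him k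
    rw [hreal μ him k, Complex.ofReal_re]
  constructor
  · intro k hk
    have hk0 : k ≠ 0 := by omega
    have hdetC : ((1 - A ^ k).det : ℂ) = (R.map fun μ => 1 - μ ^ k).prod := by
      have h1 : ((1 - A ^ k).det : ℂ) = ((Complex.ofRealHom.mapMatrix (1 - A ^ k))).det :=
        RingHom.map_det Complex.ofRealHom (1 - A ^ k)
      have h2 : Complex.ofRealHom.mapMatrix (1 - A ^ k)
          = 1 - (Complex.ofRealHom.mapMatrix A) ^ k := by
        rw [map_sub, map_one, map_pow]
      have h3 : Complex.ofRealHom.mapMatrix A = B := rfl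
      rw [h1, h2, h3, aux_det_one_sub_pow hk0, ← hRB]
    set Rr := R.filter (fun μ => μ.im = 0) with hRr
    set Rn := R.filter (fun μ => ¬ μ.im = 0) with hRn
    have hsplit : Rr + Rn = R := Multiset.filter_add_not _ _
    have hprodsplit : (R.map fun μ => 1 - μ ^ k).prod
        = (Rr.map fun μ => 1 - μ ^ k).prod * (Rn.map fun μ => 1 - μ ^ k).prod := by
      conv_lhs => rw [← hsplit]
      rw [Multiset.map_add, Multiset.prod_add]
    have hRnconj : Rn.map (starRingEnd ℂ) = Rn :=
      aux_filter_conj R hconjR _ (fun z => by simp)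
    have hcp := aux_conj_prod (fun z => 1 - z ^ k) (by intro z; simp) (Multiset.card Rn) Rn
      rfl hRnconj (fun z hz => (Multiset.mem_filter.mp hz).2)
      (fun z hz => hnz z (Multiset.mem_of_mem_filter hz) hk0)
    set c : ℂ := (Rn.map fun μ => 1 - μ ^ k).prod with hc
    set P : ℝ := (Rr.map fun μ => 1 - μ.re ^ k).prod with hP
    have hRrprod : (Rr.map fun μ => 1 - μ ^ k).prod = ((P : ℝ) : ℂ) := by
      rw [hP, show (((Multiset.map (fun μ => 1 - μ.re ^ k) Rr).prod : ℝ) : ℂ)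
          = Complex.ofRealHom (Multiset.map (fun μ => 1 - μ.re ^ k) Rr).prod from rfl,
        map_multiset_prod, Multiset.map_map]
      apply congrArg
      apply Multiset.map_congr rfl
      intro μ hμ
      have him : μ.im = 0 := (Multiset.mem_filter.mp hμ).2
      simp only [Function.comp_apply, Complex.ofRealHom_eq_coe, Complex.ofReal_sub,
        Complex.ofReal_one, Complex.ofReal_pow]
      rw [hreal μ him k, Complex.ofReal_pow]
    have hcre : c = ((c.re : ℝ) : ℂ) := Complex.ext rfl (by simp [hcp.2])
    have hdetR : (1 - A ^ k).det = P * c.re := by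
      have hstep : (P : ℂ) * c = ((P * c.re : ℝ) : ℂ) := by
        rw [Complex.ofReal_mul, ← hcre]
      have : ((1 - A ^ k).det : ℂ) = ((P * c.re : ℝ) : ℂ) := by
        rw [hdetC, hprodsplit, hRrprod, hstep]
      exact_mod_cast this
    rw [hdetR, sign_mul, sign_pos hcp.1]
    have hsP := aux_sign_prod (Rr.map fun μ => 1 - μ.re ^ k) ?_
    · rw [mul_one]
      rw [← hP] at hsP
      rw [hsP]
      congr 1
      rw [← Multiset.countP_eq_card_filter, Multiset.countP_map]
      rw [hRr, Multiset.filter_filter]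
      show Multiset.card _ = Multiset.card (R.filter fun μ => μ.im = 0 ∧ 1 < (μ ^ k).re)
      congr 1
      apply Multiset.filter_congr
      intro μ hμ
      constructor
      · rintro ⟨hlt, him⟩
        refine ⟨him, ?_⟩
        rw [hrealre μ him k]
        linarith
      · rintro ⟨him, hgt⟩
        rw [hrealre μ him k] at hgt
        exact ⟨by linarith, him⟩
    · intro x hx
      obtain ⟨μ, hμ, hxe⟩ := Multiset.mem_map.mp hx
      have him : μ.im = 0 := (Multiset.mem_filter.mp hμ).2
      have hμR : μ ∈ R := Multiset.mem_of_mem_filter hμ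
      have habsre : |μ.re| ≠ 1 := by
        have h1 : μ = (μ.re : ℂ) := Complex.ext rfl (by simp [him])
        have h2 := habs μ hμR
        rwa [h1, Complex.norm_real, Real.norm_eq_abs] at h2
      rw [← hxe]
      exact sub_ne_zero.mpr fun hc' => aux_pow_ne_one habsre hk0 hc'.symm
  · intro k hk
    have hk0 : k ≠ 0 := by omega
    constructor
    · intro hk2
      have hcount : u k = σplus := by
        show Multiset.card (R.filter fun μ => μ.im = 0 ∧ 1 < (μ ^ k).re)
            = Multiset.card (R.filter fun μ => μ.im = 0 ∧ 1 < μ.re)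
        congr 1
        apply Multiset.filter_congr
        intro μ hμ
        exact and_congr_right fun him => by
          rw [hrealre μ him k]; exact aux_pow_gt_one_odd hk2
      rw [hcount]
    · intro hk2
      have hcount : u k = σplus + σminus := by
        show Multiset.card (R.filter fun μ => μ.im = 0 ∧ 1 < (μ ^ k).re) = _
        have h1 : R.filter (fun μ => μ.im = 0 ∧ 1 < (μ ^ k).re)
            = R.filter (fun μ => (μ.im = 0 ∧ 1 < μ.re) ∨ (μ.im = 0 ∧ μ.re < -1)) := by
          apply Multiset.filter_congr
          intro μ hμ
          constructor
          · rintro ⟨him, hgt⟩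
            rw [hrealre μ him k] at hgt
            rcases (aux_pow_gt_one_even hk0 hk2).mp hgt with h | h
            · exact Or.inl ⟨him, h⟩
            · exact Or.inr ⟨him, h⟩
          · rintro (⟨him, h⟩ | ⟨him, h⟩) <;> refine ⟨him, ?_⟩ <;> rw [hrealre μ him k]
            · exact (aux_pow_gt_one_even hk0 hk2).mpr (Or.inl h)
            · exact (aux_pow_gt_one_even hk0 hk2).mpr (Or.inr h)
        rw [h1]
        have h2 := Multiset.filter_add_filter (fun μ : ℂ => μ.im = 0 ∧ 1 < μ.re)
          (fun μ : ℂ => μ.im = 0 ∧ μ.re < -1) R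
        have h3 : R.filter (fun μ : ℂ => (μ.im = 0 ∧ 1 < μ.re) ∧ (μ.im = 0 ∧ μ.re < -1)) = 0 := by
          rw [Multiset.filter_eq_nil]
          rintro μ hμ ⟨⟨_, h⟩, ⟨_, h'⟩⟩
          linarith
        have h4 := congrArg Multiset.card h2
        rw [Multiset.card_add, Multiset.card_add, h3] at h4
        simp only [Multiset.card_zero, add_zero] at h4
        omega
      rw [hcount]
end
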